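/- arXiv:1511.00302 — 3 statements merged into one kernel-verified Lean document; each statement's English description precedes it below -/
import Mathlib

section
/- Let γ ∈ (0,1) and let i(n) = ∫_{-∞}^{∞} e^{-n(x² + x³ + |x|^{3+γ})} dx for n ≥ 1. Then i(n) ≥ √(π/n) · (1 - Γ(2 + γ/2)/√π · n^{-(1+γ)/2}). -/
/-!
Since `e^{-y} ≥ 1 - y`, the integrand is at least `e^{-nx²} (1 - n x³ - n |x|^{3+γ})`. Integrating
against the Gaussian, the cubic moment vanishes by oddness and the absolute moment of order
`3 + γ` equals `Γ(2 + γ/2) n^{-2-γ/2}`, which gives the bound after factoring out `√(π/n)`.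
Integrability of the integrand itself comes from `x³ + |x|^{3+γ} ≥ -1`, valid because `γ ≥ 0`.
-/

open Real MeasureTheory Set

theorem integrable_comp_abs_of_integrableOn_Ioi {E : Type*} [NormedAddCommGroup E] {f : ℝ → E}
    (hf : IntegrableOn f (Ioi 0)) : Integrable fun x => f |x| := by
  have hpos : IntegrableOn (fun x => f |x|) (Ioi 0) :=
    hf.congr_fun (fun x hx => by rw [abs_of_pos hx]) measurableSet_Ioi
  rw [← integrableOn_univ, ← Iic_union_Ioi (a := (0 : ℝ)), integrableOn_union]
  refine ⟨?_, hpos⟩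
  rw [← (Measure.measurePreserving_neg (volume : Measure ℝ)).integrableOn_comp_preimage
    (Homeomorph.neg ℝ).measurableEmbedding]
  simp only [Function.comp_def, abs_neg, neg_preimage, neg_Iic, neg_zero]
  rwa [integrableOn_Ici_iff_integrableOn_Ioi]

theorem integral_eq_zero_of_odd {E : Type*} [NormedAddCommGroup E] [NormedSpace ℝ E]
    {f : ℝ → E} (hf : ∀ x, f (-x) = -f x) : ∫ x, f x = 0 := by
  have h := integral_neg_eq_self f volume
  simp only [hf, integral_neg] at h
  have htwice : (2 : ℝ) • ∫ x, f x = 0 := by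
    rw [two_smul]
    nth_rewrite 1 [← h]
    exact neg_add_cancel _
  exact (smul_eq_zero.mp htwice).resolve_left two_ne_zero

theorem integrable_pow_mul_exp_neg_mul_sq {b : ℝ} (hb : 0 < b) (k : ℕ) :
    Integrable fun x : ℝ => x ^ k * exp (-b * x ^ 2) := by
  simpa only [rpow_natCast] using integrable_rpow_mul_exp_neg_mul_sq hb
    (by linarith [k.cast_nonneg (α := ℝ)] : (-1 : ℝ) < k)

theorem integrable_abs_rpow_mul_exp_neg_mul_sq {b : ℝ} (hb : 0 < b) {s : ℝ} (hs : -1 < s) :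
    Integrable fun x : ℝ => |x| ^ s * exp (-b * x ^ 2) := by
  simpa only [sq_abs] using integrable_comp_abs_of_integrableOn_Ioi
    (integrableOn_rpow_mul_exp_neg_mul_sq hb hs)

theorem integral_abs_rpow_mul_exp_neg_mul_sq {b : ℝ} (hb : 0 < b) {s : ℝ} (hs : -1 < s) :
    ∫ x : ℝ, |x| ^ s * exp (-b * x ^ 2) = b ^ (-(s + 1) / 2) * Gamma ((s + 1) / 2) := by
  have h := integral_comp_abs (f := fun y : ℝ => y ^ s * exp (-b * y ^ 2))
  simp only [sq_abs] at h
  simp_rw [h, ← rpow_two]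
  rw [integral_rpow_mul_exp_neg_mul_rpow two_pos hs hb]
  ring

theorem integral_pow_mul_exp_neg_mul_sq_of_odd {k : ℕ} (hk : Odd k) (b : ℝ) :
    ∫ x : ℝ, x ^ k * exp (-b * x ^ 2) = 0 :=
  integral_eq_zero_of_odd fun x => by rw [neg_sq, hk.neg_pow, neg_mul]

theorem exp_mul_one_add_le_exp_add (a b : ℝ) : exp a * (1 + b) ≤ exp (a + b) := by
  rw [exp_add, add_comm 1]
  exact mul_le_mul_of_nonneg_left (add_one_le_exp b) (exp_pos a).le

theorem neg_one_le_pow_three_add_abs_rpow {s : ℝ} (hs : 3 ≤ s) (x : ℝ) :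
    -1 ≤ x ^ 3 + |x| ^ s := by
  have hcube : -|x| ^ (3 : ℝ) ≤ x ^ 3 := by
    rw [rpow_ofNat, ← abs_pow]
    exact neg_abs_le _
  rcases le_total |x| 1 with hx | hx
  · have : |x| ^ (3 : ℝ) ≤ 1 := rpow_le_one (abs_nonneg x) hx (by norm_num)
    linarith [rpow_nonneg (abs_nonneg x) s]
  · linarith [rpow_le_rpow_of_exponent_le hx hs]

theorem integrable_exp_neg_mul_sq_add {b : ℝ} (hb : 0 < b) {h : ℝ → ℝ} (hh : Continuous h)
    (hlow : ∀ x, -1 ≤ h x) : Integrable fun x => exp (-b * (x ^ 2 + h x)) := by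
  refine ((integrable_exp_neg_mul_sq hb).const_mul (exp b)).mono' (by fun_prop) ?_
  refine Filter.Eventually.of_forall fun x => ?_
  rw [norm_of_nonneg (exp_pos _).le, ← exp_add, exp_le_exp]
  nlinarith [hlow x]

theorem sqrt_div_eq_mul_rpow_neg_half (a : ℝ) {n : ℝ} (hn : 0 < n) :
    √(a / n) = √a * n ^ (-(1 / 2) : ℝ) := by
  rw [sqrt_div' a hn.le, sqrt_eq_rpow n, rpow_neg hn.le, div_eq_mul_inv]

theorem dixon_one_dim_lower_bound (γ : ℝ) (hγ : γ ∈ Set.Ioo (0 : ℝ) 1) (n : ℝ) (hn : 1 ≤ n) :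
    Real.sqrt (Real.pi / n) *
      (1 - Real.Gamma (2 + γ / 2) / Real.sqrt Real.pi * n ^ (-(1 + γ) / 2))
    ≤ ∫ x : ℝ, Real.exp (-n * (x ^ 2 + x ^ 3 + |x| ^ (3 + γ))) := by
  have hn0 : 0 < n := one_pos.trans_le hn
  have hs : 3 ≤ 3 + γ := by linarith [hγ.1]
  have hI0 := integrable_exp_neg_mul_sq hn0
  have hI3 := (integrable_pow_mul_exp_neg_mul_sq hn0 3).const_mul n
  have hIs :=
    (integrable_abs_rpow_mul_exp_neg_mul_sq hn0 (by linarith : (-1 : ℝ) < 3 + γ)).const_mul n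
  have hI03 : Integrable fun x => exp (-n * x ^ 2) - n * (x ^ 3 * exp (-n * x ^ 2)) :=
    hI0.sub hI3
  calc _ = √(π / n) - n * (n ^ (-(3 + γ + 1) / 2) * Gamma ((3 + γ + 1) / 2)) := by
        rw [sqrt_div_eq_mul_rpow_neg_half π hn0, show (3 + γ + 1) / 2 = 2 + γ / 2 by ring]
        have hpow : n * n ^ (-(3 + γ + 1) / 2) = n ^ (-(1 / 2) : ℝ) * n ^ (-(1 + γ) / 2) := by
          rw [← rpow_add hn0, ← rpow_one_add' hn0.le (by linarith)]
          ring_nf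
        rw [← mul_assoc, hpow]
        field_simp
    _ = ∫ x, exp (-n * x ^ 2) - n * (x ^ 3 * exp (-n * x ^ 2))
          - n * (|x| ^ (3 + γ) * exp (-n * x ^ 2)) := by
        rw [integral_sub hI03 hIs, integral_sub hI0 hI3, integral_const_mul,
          integral_const_mul, integral_gaussian,
          integral_pow_mul_exp_neg_mul_sq_of_odd (by decide : Odd 3),
          integral_abs_rpow_mul_exp_neg_mul_sq hn0 (by linarith), mul_zero, sub_zero]
    _ ≤ _ := by
        refine integral_mono (hI03.sub hIs) ?_ fun x => ?_
        · simpa only [add_assoc] using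
            integrable_exp_neg_mul_sq_add (h := fun x => x ^ 3 + |x| ^ (3 + γ)) hn0
              ((continuous_pow 3).add (continuous_abs.rpow_const fun _ => Or.inr (by linarith)))
              (neg_one_le_pow_three_add_abs_rpow hs)
        · calc _ = exp (-n * x ^ 2) * (1 + -n * (x ^ 3 + |x| ^ (3 + γ))) := by ring
            _ ≤ exp (-n * x ^ 2 + -n * (x ^ 3 + |x| ^ (3 + γ))) := exp_mul_one_add_le_exp_add _ _
            _ = _ := by ring_nf
end

section
/- Let γ ∈ (0,1) and n ≥ 1. Then ∫_0^∞ e^{-n(x² + x³ + x^{3+γ})} dx ≤ (1/2)√(π/n) · (1 - Γ(2+γ/2)/√π · n^{-(1+γ)/2} - 1/√(πn) + (15/8) n^{-1} + 2Γ((7+γ)/2)/√π · n^{-(1+γ/2)} + Γ(7/2+γ)/√π · n^{-(1+γ)}). -/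
/-!
Bound `exp (-y) ≤ 1 - y + y² / 2` at `y = n (x³ + x^(3+γ))` under the Gaussian weight
`exp (-n x²)`: the six resulting terms are Gaussian moments
`∫₀^∞ x^s exp (-n x²) dx = Γ((s+1)/2) n^(-(s+1)/2) / 2`.
Written in powers of `n^(-1/2)` and `n^(-γ/2)`, this bound falls short of the stated one by
`n^(-3/2) (15 √π / 32 + Γ((7+γ)/2) n^(-γ/2) / 2 + Γ(7/2+γ) n^(-γ) / 4) ≥ 0`.
-/

open Real MeasureTheory Set

lemma exp_neg_le_one_sub_add_sq_div_two {y : ℝ} (hy : 0 ≤ y) :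
    exp (-y) ≤ 1 - y + y ^ 2 / 2 := by
  -- `(1 - y + y²/2) (1 + y + y²/2) = 1 + y⁴/4` and `1 + y + y²/2 ≤ exp y`
  have hinv : exp (-y) * exp y = 1 := by rw [← exp_add, neg_add_cancel, exp_zero]
  nlinarith [quadratic_le_exp_of_nonneg hy, exp_pos (-y), sq_nonneg (y ^ 2)]

lemma exp_neg_mul_add_add_le {n x a b : ℝ} (hn : 0 ≤ n) (ha : 0 ≤ a) (hb : 0 ≤ b) :
    exp (-n * (x + a + b)) ≤
      exp (-n * x) *
        (1 - n * a - n * b + n ^ 2 / 2 * a ^ 2 + n ^ 2 * (a * b) + n ^ 2 / 2 * b ^ 2) := by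
  have hsplit : exp (-n * (x + a + b)) = exp (-n * x) * exp (-(n * (a + b))) := by
    rw [← exp_add]; ring_nf
  rw [hsplit]
  calc exp (-n * x) * exp (-(n * (a + b)))
      ≤ exp (-n * x) * (1 - n * (a + b) + (n * (a + b)) ^ 2 / 2) :=
        mul_le_mul_of_nonneg_left (exp_neg_le_one_sub_add_sq_div_two (by positivity)) (exp_pos _).le
    _ = _ := by ring

noncomputable def gaussianMoment (b s : ℝ) : ℝ :=
  Gamma ((s + 1) / 2) / 2 * b ^ (-(s + 1) / 2)

lemma integral_rpow_mul_exp_neg_mul_sq {b s : ℝ} (hb : 0 < b) (hs : -1 < s) :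
    ∫ x in Ioi (0 : ℝ), x ^ s * exp (-b * x ^ 2) = gaussianMoment b s := by
  have h := integral_rpow_mul_exp_neg_mul_rpow two_pos hs hb
  simp only [rpow_two] at h
  rw [h, gaussianMoment]
  ring

section GaussianSums

variable {ι : Type*} (t : Finset ι) (c s : ι → ℝ) {b : ℝ}

lemma integrableOn_sum_mul_rpow_mul_exp_neg_mul_sq (hb : 0 < b) (hs : ∀ i ∈ t, -1 < s i) :
    IntegrableOn (fun x ↦ ∑ i ∈ t, c i * (x ^ s i * exp (-b * x ^ 2))) (Ioi 0) :=
  integrable_finsetSum t fun i hi ↦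
    (integrableOn_rpow_mul_exp_neg_mul_sq hb (hs i hi)).const_mul (c i)

lemma integral_sum_mul_rpow_mul_exp_neg_mul_sq (hb : 0 < b) (hs : ∀ i ∈ t, -1 < s i) :
    ∫ x in Ioi (0 : ℝ), ∑ i ∈ t, c i * (x ^ s i * exp (-b * x ^ 2)) =
      ∑ i ∈ t, c i * gaussianMoment b (s i) := by
  rw [integral_finsetSum t fun i hi ↦
    (integrableOn_rpow_mul_exp_neg_mul_sq hb (hs i hi)).const_mul (c i)]
  refine Finset.sum_congr rfl fun i hi ↦ ?_
  rw [integral_const_mul, integral_rpow_mul_exp_neg_mul_sq hb (hs i hi)]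

end GaussianSums

/-- The integral of `exp (-n x²) (1 - y + y² / 2)` with `y = n (x^p + x^q)`. -/
noncomputable def gaussianTaylorBound (n p q : ℝ) : ℝ :=
  gaussianMoment n 0 - n * gaussianMoment n p - n * gaussianMoment n q
    + n ^ 2 / 2 * gaussianMoment n (2 * p) + n ^ 2 * gaussianMoment n (p + q)
    + n ^ 2 / 2 * gaussianMoment n (2 * q)

theorem integral_exp_neg_mul_sq_add_rpow_add_rpow_le {n p q : ℝ} (hn : 0 < n)
    (hp : -1 / 2 < p) (hq : -1 / 2 < q) :
    ∫ x in Ioi (0 : ℝ), exp (-n * (x ^ 2 + x ^ p + x ^ q)) ≤ gaussianTaylorBound n p q := by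
  set c : Fin 6 → ℝ := ![1, -n, -n, n ^ 2 / 2, n ^ 2, n ^ 2 / 2]
  set s : Fin 6 → ℝ := ![0, p, q, 2 * p, p + q, 2 * q]
  have hs : ∀ i ∈ Finset.univ, -1 < s i := by
    intro i _
    fin_cases i <;> simp [s] <;> linarith
  have hpt : ∀ x ∈ Ioi (0 : ℝ),
      exp (-n * (x ^ 2 + x ^ p + x ^ q)) ≤ ∑ i, c i * (x ^ s i * exp (-n * x ^ 2)) := by
    intro x hx
    have hx0 : 0 ≤ x := le_of_lt hx
    have hsq : ∀ r : ℝ, x ^ (2 * r) = (x ^ r) ^ 2 := fun r ↦ by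
      rw [mul_comm, ← Nat.cast_ofNat, rpow_mul_natCast hx0]
    calc exp (-n * (x ^ 2 + x ^ p + x ^ q))
        ≤ _ := exp_neg_mul_add_add_le hn.le (rpow_nonneg hx0 p) (rpow_nonneg hx0 q)
      _ = ∑ i, c i * (x ^ s i * exp (-n * x ^ 2)) := by
        simp only [Fin.sum_univ_six, c, s, Matrix.cons_val, rpow_zero, hsq, rpow_add hx]
        ring
  calc ∫ x in Ioi (0 : ℝ), exp (-n * (x ^ 2 + x ^ p + x ^ q))
      ≤ ∫ x in Ioi (0 : ℝ), ∑ i, c i * (x ^ s i * exp (-n * x ^ 2)) :=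
        integral_mono_of_nonneg (ae_of_all _ fun x ↦ (exp_pos _).le)
          (integrableOn_sum_mul_rpow_mul_exp_neg_mul_sq _ c s hn hs)
          ((ae_restrict_mem measurableSet_Ioi).mono hpt)
    _ = ∑ i, c i * gaussianMoment n (s i) := integral_sum_mul_rpow_mul_exp_neg_mul_sq _ c s hn hs
    _ = gaussianTaylorBound n p q := by
        simp only [Fin.sum_univ_six, c, s, Matrix.cons_val, gaussianTaylorBound]
        ring

lemma Real.Gamma_seven_div_two : Gamma (7 / 2) = 15 / 8 * √π := by
  rw [show (7 / 2 : ℝ) = (3 : ℕ) + 1 / 2 by norm_num, Gamma_nat_add_half]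
  norm_num [Nat.doubleFactorial]
  ring

section MonomialsInInvSqrt

variable {n : ℝ} (γ : ℝ)

lemma rpow_eq_inv_sqrt_pow_mul_rpow_pow (hn : 0 < n) (a : ℝ) (k j : ℕ)
    (ha : a = -(k + j * γ) / 2) :
    n ^ a = (√n)⁻¹ ^ k * (n ^ (-γ / 2)) ^ j := by
  rw [ha, show -(k + j * γ) / 2 = -(1 / 2) * k + (-γ / 2) * j by ring,
    rpow_add hn, rpow_mul_natCast hn.le, rpow_mul_natCast hn.le, rpow_neg hn.le, ← sqrt_eq_rpow]

lemma gaussianMoment_eq_inv_sqrt_pow_mul_rpow_pow (hn : 0 < n) (s : ℝ) (k j : ℕ)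
    (hs : s + 1 = k + j * γ) :
    gaussianMoment n s = Gamma ((s + 1) / 2) / 2 * ((√n)⁻¹ ^ k * (n ^ (-γ / 2)) ^ j) := by
  rw [gaussianMoment, rpow_eq_inv_sqrt_pow_mul_rpow_pow γ hn _ k j (by rw [hs])]

lemma gaussianTaylorBound_three_three_add (hn : 0 < n) :
    gaussianTaylorBound n 3 (3 + γ) =
      √π / 2 * (√n)⁻¹ - (√n)⁻¹ ^ 2 / 2 - Gamma (2 + γ / 2) / 2 * (√n)⁻¹ ^ 2 * n ^ (-γ / 2)
        + 15 * √π / 32 * (√n)⁻¹ ^ 3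
        + Gamma ((7 + γ) / 2) / 2 * (√n)⁻¹ ^ 3 * n ^ (-γ / 2)
        + Gamma (7 / 2 + γ) / 4 * (√n)⁻¹ ^ 3 * (n ^ (-γ / 2)) ^ 2 := by
  have moment := gaussianMoment_eq_inv_sqrt_pow_mul_rpow_pow γ hn
  rw [gaussianTaylorBound, moment 0 1 0 (by norm_num), moment 3 4 0 (by norm_num),
    moment (3 + γ) 4 1 (by push_cast; ring), moment (2 * 3) 7 0 (by norm_num),
    moment (3 + (3 + γ)) 7 1 (by push_cast; ring), moment (2 * (3 + γ)) 7 2 (by push_cast; ring),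
    show (3 + γ + 1) / 2 = 2 + γ / 2 by ring, show 3 + (3 + γ) + 1 = 7 + γ by ring,
    show (2 * (3 + γ) + 1) / 2 = 7 / 2 + γ by ring]
  norm_num [Gamma_one_half_eq, Gamma_two, Gamma_seven_div_two]
  set r := √n
  have hr : r ≠ 0 := by positivity
  rw [show n = r ^ 2 from (sq_sqrt hn.le).symm]
  field_simp
  ring

end MonomialsInInvSqrt

theorem dixon_one_dim_upper_bound (γ : ℝ) (hγ : γ ∈ Set.Ioo (0 : ℝ) 1) (n : ℝ) (hn : 1 ≤ n) :
    ∫ x in Set.Ioi (0 : ℝ), Real.exp (-n * (x ^ 2 + x ^ 3 + x ^ (3 + γ)))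
    ≤ 1 / 2 * Real.sqrt (Real.pi / n) *
        (1 - Real.Gamma (2 + γ / 2) / Real.sqrt Real.pi * n ^ (-(1 + γ) / 2)
          - 1 / Real.sqrt (Real.pi * n)
          + 15 / 8 * n⁻¹
          + 2 * Real.Gamma ((7 + γ) / 2) / Real.sqrt Real.pi * n ^ (-(1 + γ / 2))
          + Real.Gamma (7 / 2 + γ) / Real.sqrt Real.pi * n ^ (-(1 + γ))) := by
  obtain ⟨hγ0, -⟩ := hγ
  have hn0 : 0 < n := by linarith
  have bound := integral_exp_neg_mul_sq_add_rpow_add_rpow_le hn0 (p := 3) (q := 3 + γ)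
    (by norm_num) (by linarith)
  simp only [rpow_ofNat, gaussianTaylorBound_three_three_add γ hn0] at bound
  refine bound.trans (sub_nonneg.1 ?_)
  have monomial := rpow_eq_inv_sqrt_pow_mul_rpow_pow γ hn0
  rw [sqrt_div' _ hn0.le, sqrt_mul pi_pos.le, monomial (-(1 + γ) / 2) 1 1 (by push_cast; ring),
    monomial (-(1 + γ / 2)) 2 1 (by push_cast; ring), monomial (-(1 + γ)) 2 2 (by push_cast; ring),
    show n⁻¹ = (√n)⁻¹ ^ 2 by rw [inv_pow, sq_sqrt hn0.le]]
  refine le_of_le_of_eq (by positivity : 0 ≤ (√n)⁻¹ ^ 3 * (15 * √π / 32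
    + Gamma ((7 + γ) / 2) / 2 * n ^ (-γ / 2) + Gamma (7 / 2 + γ) / 4 * (n ^ (-γ / 2)) ^ 2)) ?_
  field_simp
  ring
end

section
/- Let f(x,y) = -log cos((√3/2)x - (1/2)y + π/6) - log cos(-(√3/2)x - (1/2)y + π/6) - log cos(y + π/6) + 3 log(√3/2), defined near (0,0). Then for r ∈ (0, π/3) and all (x,y) with x² + y² ≤ r², |f(x,y) - x² - y² - (√3/9)(y³ - 3x²y)| ≤ C (x² + y²)², where C = (3/32) · (1 + 2 sin²(r + π/6))/cos⁴(r + π/6). -/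
/-!
Each summand of `f` is `-log cos (u + π/6)` for a linear form `u` in `(x, y)` with
`u² ≤ x² + y² ≤ r²`. Taylor's theorem to third order at `π/6` bounds each remainder by
`M u⁴ / 24`, where `M = 2 (1 + 2 sin²(r + π/6)) / cos⁴(r + π/6)` dominates the fourth derivative
`2 (1 + 2 sin² v) / cos⁴ v` of `-log cos` on `[π/6 - r, π/6 + r]`, since it is even and increasing
on `[0, π/2)`. The three cubic Taylor polynomials add up to the quadratic and cubic terms of the
statement, and the three fourth powers add up to `(9/8) (x² + y²)²`.
-/

open Real Set Finset
open scoped Nat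

/- Rescaling to `s ↦ w (s * t)` on `[0, 1]` handles both signs of `t` at once. -/
theorem abs_le_of_hasDerivAt_of_abs_le_pow {w w' : ℝ → ℝ} {K t : ℝ} {k : ℕ}
    (hw : ∀ s ∈ uIcc 0 t, HasDerivAt w (w' s) s) (h0 : w 0 = 0)
    (hw' : ∀ s ∈ uIcc 0 t, |w' s| ≤ K * |s| ^ k) :
    |w t| ≤ K * |t| ^ (k + 1) / (k + 1) := by
  have hmem : ∀ s ∈ Icc (0 : ℝ) 1, s * t ∈ uIcc 0 t := fun s ⟨hs0, hs1⟩ => by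
    rcases le_total 0 t with ht | ht
    · exact mem_uIcc_of_le (by positivity) (by nlinarith)
    · exact mem_uIcc_of_ge (by nlinarith) (by nlinarith)
  have hg : ∀ s ∈ Icc (0 : ℝ) 1, HasDerivAt (fun s => w (s * t)) (w' (s * t) * t) s :=
    fun s hs => (hw _ (hmem s hs)).comp s (by simpa using (hasDerivAt_id s).mul_const t)
  have hB : ∀ s, HasDerivAt (fun s => K * |t| ^ (k + 1) * s ^ (k + 1) / (k + 1))
      (K * |t| ^ (k + 1) * s ^ k) s := fun s => by
    refine (((hasDerivAt_pow (k + 1) s).const_mul (K * |t| ^ (k + 1))).div_const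
      ((k : ℝ) + 1)).congr_deriv ?_
    push_cast
    field_simp
  have key := image_norm_le_of_norm_deriv_right_le_deriv_boundary
    (fun s hs => (hg s hs).continuousAt.continuousWithinAt)
    (fun s hs => (hg s (Ico_subset_Icc_self hs)).hasDerivWithinAt)
    (by simp [h0]) hB
    (fun s hs => by
      have hs' := Ico_subset_Icc_self hs
      calc ‖w' (s * t) * t‖ = |w' (s * t)| * |t| := by rw [Real.norm_eq_abs, abs_mul]
        _ ≤ K * |s * t| ^ k * |t| := by gcongr; exact hw' _ (hmem s hs')
        _ = K * |t| ^ (k + 1) * s ^ k := by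
          rw [abs_mul, abs_of_nonneg hs'.1]; ring)
    (right_mem_Icc.2 zero_le_one)
  simpa using key

theorem hasDerivAt_sum_range_mul_pow_div_factorial (c : ℕ → ℝ) (n : ℕ) (s : ℝ) :
    HasDerivAt (fun s => ∑ k ∈ range (n + 1), c k * s ^ k / k !)
      (∑ k ∈ range n, c (k + 1) * s ^ k / k !) s := by
  simp only [sum_range_succ' _ n, pow_zero, Nat.factorial_zero, Nat.cast_one, mul_one, div_one]
  refine (HasDerivAt.fun_sum fun k _ =>
    ((hasDerivAt_pow (k + 1) s).const_mul (c (k + 1))).div_const _).add_const _ |>.congr_deriv ?_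
  refine sum_congr rfl fun k _ => ?_
  push_cast [Nat.factorial_succ]
  field_simp

theorem abs_sub_sum_taylor_le {D : ℕ → ℝ → ℝ} {n : ℕ} {M t : ℝ}
    (hD : ∀ k < n, ∀ s ∈ uIcc 0 t, HasDerivAt (D k) (D (k + 1) s) s)
    (hM : ∀ s ∈ uIcc 0 t, |D n s| ≤ M) :
    |D 0 t - ∑ k ∈ range n, D k 0 * t ^ k / k !| ≤ M * |t| ^ n / n ! := by
  induction n generalizing D t with
  | zero => simpa using hM t right_mem_uIcc
  | succ n ih =>
    have hD' : ∀ s ∈ uIcc 0 t,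
        |D 1 s - ∑ k ∈ range n, D (k + 1) 0 * s ^ k / k !| ≤ M / n ! * |s| ^ n := fun s hs => by
      have hsub : uIcc 0 s ⊆ uIcc 0 t := uIcc_subset_uIcc_left hs
      have := ih (D := fun k => D (k + 1)) (fun k hk u hu => hD (k + 1) (by omega) u (hsub hu))
        (fun u hu => hM u (hsub hu))
      rwa [mul_div_right_comm] at this
    have key := abs_le_of_hasDerivAt_of_abs_le_pow
      (w := fun s => D 0 s - ∑ k ∈ range (n + 1), D k 0 * s ^ k / k !)
      (fun s hs => (hD 0 (by omega) s hs).sub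
        (hasDerivAt_sum_range_mul_pow_div_factorial (fun k => D k 0) n s))
      (by simp [sum_range_succ']) hD'
    calc _ ≤ M / n ! * |t| ^ (n + 1) / (n + 1) := key
      _ = M * |t| ^ (n + 1) / (n + 1)! := by
        push_cast [Nat.factorial_succ]
        field_simp

/- The derivatives of `-log ∘ cos` up to order four; every index `≥ 4` gives the fourth. -/
noncomputable def negLogCosDeriv : ℕ → ℝ → ℝ
  | 0 => fun u => -log (cos u)
  | 1 => tan
  | 2 => fun u => 1 / cos u ^ 2
  | 3 => fun u => 2 * sin u / cos u ^ 3
  | _ => fun u => 2 * (1 + 2 * sin u ^ 2) / cos u ^ 4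

theorem hasDerivAt_negLogCosDeriv {k : ℕ} (hk : k < 4) {u : ℝ} (hu : cos u ≠ 0) :
    HasDerivAt (negLogCosDeriv k) (negLogCosDeriv (k + 1) u) u := by
  have hsin := hasDerivAt_sin u
  have hcos := hasDerivAt_cos u
  interval_cases k
  · refine (hcos.log hu).neg.congr_deriv ?_
    simp [negLogCosDeriv, tan_eq_sin_div_cos, neg_div]
  · exact hasDerivAt_tan hu
  · refine ((hasDerivAt_const u 1).div (hcos.pow 2) (pow_ne_zero 2 hu)).congr_deriv ?_
    simp only [negLogCosDeriv, Pi.pow_apply]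
    field_simp
    ring
  · refine ((hsin.const_mul 2).div (hcos.pow 3) (pow_ne_zero 3 hu)).congr_deriv ?_
    simp only [negLogCosDeriv, Pi.pow_apply]
    field_simp
    linear_combination cos u ^ 2 * sin_sq_add_cos_sq u

theorem negLogCosDeriv_four_le {u v : ℝ} (huv : |u| ≤ v) (hv : v < π / 2) :
    |negLogCosDeriv 4 u| ≤ negLogCosDeriv 4 v := by
  have hcos_v : 0 < cos v := cos_pos_of_mem_Ioo ⟨by linarith [abs_nonneg u], hv⟩
  have hcos : cos v ≤ cos u := by
    rw [← cos_abs u]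
    exact cos_le_cos_of_nonneg_of_le_pi (abs_nonneg u) (by linarith [pi_pos]) huv
  have hsin : sin u ^ 2 ≤ sin v ^ 2 := by
    nlinarith [sin_sq_add_cos_sq u, sin_sq_add_cos_sq v]
  simp only [negLogCosDeriv]
  rw [abs_of_nonneg (by positivity)]
  gcongr

noncomputable def negLogCosTaylor (t : ℝ) : ℝ :=
  -log (√3 / 2) + √3 / 3 * t + 2 / 3 * t ^ 2 + 4 * √3 / 27 * t ^ 3

theorem sum_negLogCosDeriv_pi_div_six (t : ℝ) :
    ∑ k ∈ range 4, negLogCosDeriv k (π / 6) * t ^ k / k ! = negLogCosTaylor t := by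
  have h3 : √3 ^ 2 = 3 := sq_sqrt (by norm_num)
  simp only [sum_range_succ, range_one, sum_singleton, negLogCosDeriv, negLogCosTaylor,
    tan_eq_sin_div_cos, cos_pi_div_six, sin_pi_div_six, Nat.factorial]
  push_cast
  field_simp
  linear_combination (-(162 * t + 72 * t ^ 3) * √3 ^ 2 - 324 * t ^ 2 * √3 - 216 * t ^ 3) * h3

theorem abs_negLogCos_sub_negLogCosTaylor_le {r t : ℝ} (hr : r < π / 3) (ht : |t| ≤ r) :
    |-log (cos (t + π / 6)) - negLogCosTaylor t|
      ≤ negLogCosDeriv 4 (r + π / 6) / 24 * t ^ 4 := by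
  have hshift : ∀ s ∈ uIcc 0 t, |s + π / 6| ≤ r + π / 6 := fun s hs => by
    have := abs_sub_left_of_mem_uIcc hs
    simp only [sub_zero] at this
    linarith [abs_add_le s (π / 6), abs_of_pos (by positivity : 0 < π / 6)]
  have hlt : r + π / 6 < π / 2 := by linarith
  have key := abs_sub_sum_taylor_le (D := fun k s => negLogCosDeriv k (s + π / 6)) (n := 4)
    (fun k hk s hs => (hasDerivAt_negLogCosDeriv hk
      (cos_pos_of_mem_Ioo (abs_lt.1 ((hshift s hs).trans_lt hlt))).ne').comp_add_const s _)
    (fun s hs => negLogCosDeriv_four_le (hshift s hs) hlt)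
  simp only [zero_add, sum_negLogCosDeriv_pi_div_six] at key
  refine key.trans_eq ?_
  rw [pow_abs, abs_of_nonneg (by positivity : (0 : ℝ) ≤ t ^ 4), Nat.factorial]
  ring

theorem negLogCosTaylor_add_add (x y : ℝ) :
    negLogCosTaylor (√3 / 2 * x - 1 / 2 * y) + negLogCosTaylor (-(√3 / 2) * x - 1 / 2 * y)
      + negLogCosTaylor y = -3 * log (√3 / 2) + x ^ 2 + y ^ 2 + √3 / 9 * (y ^ 3 - 3 * x ^ 2 * y) := by
  simp only [negLogCosTaylor]
  linear_combination (x ^ 2 / 3 - √3 * x ^ 2 * y / 9) * sq_sqrt (show (0 : ℝ) ≤ 3 by norm_num)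

theorem rotated_fourth_powers_sum (x y : ℝ) :
    (√3 / 2 * x - 1 / 2 * y) ^ 4 + (-(√3 / 2) * x - 1 / 2 * y) ^ 4 + y ^ 4
      = 9 / 8 * (x ^ 2 + y ^ 2) ^ 2 := by
  linear_combination ((√3 ^ 2 + 3) * x ^ 4 / 8 + 3 / 4 * x ^ 2 * y ^ 2) *
    sq_sqrt (show (0 : ℝ) ≤ 3 by norm_num)

theorem dixon_taylor_remainder_bound
    (f : ℝ → ℝ → ℝ)
    (hf : f = fun x y =>
      -Real.log (Real.cos (Real.sqrt 3 / 2 * x - 1 / 2 * y + Real.pi / 6))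
      - Real.log (Real.cos (-(Real.sqrt 3 / 2) * x - 1 / 2 * y + Real.pi / 6))
      - Real.log (Real.cos (y + Real.pi / 6))
      + 3 * Real.log (Real.sqrt 3 / 2))
    (r : ℝ) (hr : r ∈ Set.Ioo (0 : ℝ) (Real.pi / 3))
    (C : ℝ)
    (hC : C = 3 / 32 * ((1 + 2 * Real.sin (r + Real.pi / 6) ^ 2) / Real.cos (r + Real.pi / 6) ^ 4)) :
    ∀ x y : ℝ, x ^ 2 + y ^ 2 ≤ r ^ 2 →
      |f x y - x ^ 2 - y ^ 2 - Real.sqrt 3 / 9 * (y ^ 3 - 3 * x ^ 2 * y)|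
        ≤ C * (x ^ 2 + y ^ 2) ^ 2 := by
  intro x y hxy
  have h3 : √3 ^ 2 = 3 := sq_sqrt (by norm_num)
  have remainder (u : ℝ) (hu : u ^ 2 ≤ x ^ 2 + y ^ 2) :=
    abs_negLogCos_sub_negLogCosTaylor_le hr.2 (abs_le_of_sq_le_sq (hu.trans hxy) hr.1.le)
  have hu := remainder (√3 / 2 * x - 1 / 2 * y) (by nlinarith [sq_nonneg (x + √3 * y)])
  have hv := remainder (-(√3 / 2) * x - 1 / 2 * y) (by nlinarith [sq_nonneg (x - √3 * y)])
  have hw := remainder y (by nlinarith [sq_nonneg x])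
  have hsplit := negLogCosTaylor_add_add x y
  have hquartic := rotated_fourth_powers_sum x y
  set u := √3 / 2 * x - 1 / 2 * y
  set v := -(√3 / 2) * x - 1 / 2 * y
  set M := negLogCosDeriv 4 (r + π / 6)
  calc |f x y - x ^ 2 - y ^ 2 - √3 / 9 * (y ^ 3 - 3 * x ^ 2 * y)|
      = |(-log (cos (u + π / 6)) - negLogCosTaylor u) + (-log (cos (v + π / 6)) - negLogCosTaylor v)
          + (-log (cos (y + π / 6)) - negLogCosTaylor y)| := by
        subst hf; congr 1; linear_combination hsplit
    _ ≤ M / 24 * u ^ 4 + M / 24 * v ^ 4 + M / 24 * y ^ 4 :=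
        (abs_add_three _ _ _).trans (add_le_add (add_le_add hu hv) hw)
    _ = C * (x ^ 2 + y ^ 2) ^ 2 := by
        rw [← mul_add, ← mul_add, hquartic, hC]
        simp only [M, negLogCosDeriv]
        ring
end
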